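/- arXiv:1003.2086 — 3 statements merged into one kernel-verified Lean document; each statement's English description precedes it below -/
import Mathlib

section
/- Under the testimony model (P(E_T | E ∩ H') = P(E_T | E) and P(E_T | Eᶜ ∩ H') = P(E_T | Eᶜ) for H' ∈ {H, Hᶜ}, all four probabilities P(E ∩ H), P(Eᶜ ∩ H), P(E ∩ Hᶜ), P(Eᶜ ∩ Hᶜ) positive), assume moreover P(E_T | E) > 0, and set λ = P(E_T | Eᶜ)/P(E_T | E) (the lie factor), p = P(E | H), and Õ = P(E | H)/P(E | Hᶜ) (assumed positive and finite). Then the effective Bayes factor based on the testified evidence factorizes as P(E_T | H)/P(E_T | Hᶜ) = Õ · [1 + λ(1/p − 1)] / [1 + λ(Õ/p − 1)]. -/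
open MeasureTheory Real

/-- The probability of an event `A` (as a real number). -/
noncomputable def pr {Ω : Type*} [MeasurableSpace Ω] (P : Measure Ω) (A : Set Ω) : ℝ :=
  (P A).toReal

/-- The conditional probability `P(A | B) = P(A ∩ B) / P(B)`. -/
noncomputable def cpr {Ω : Type*} [MeasurableSpace Ω] (P : Measure Ω) (A B : Set Ω) : ℝ :=
  pr P (A ∩ B) / pr P B

/-! Conditioning the testimony on `E` and on `Eᶜ` writes `P(Eₜ | H)` as the mixture
`a p + b (1 - p)` of `a = P(Eₜ | E)` and `b = P(Eₜ | Eᶜ)` with weight `p = P(E | H)`, and likewise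
for `Hᶜ` with weight `q = P(E | Hᶜ)`. Dividing both mixtures by `a p` resp. `a q` turns their ratio
into `(p / q) · [1 + λ (1/p - 1)] / [1 + λ (1/q - 1)]` with `λ = b / a`, and `1/q = Õ/p`. -/

section Probability

variable {Ω : Type*} [MeasurableSpace Ω] (P : Measure Ω) [IsFiniteMeasure P]

-- No positivity of `P(B)` is needed: if `P(B) = 0` then also `P(A ∩ B) = 0`.
theorem pr_inter_eq_cpr_mul (A B : Set Ω) : pr P (A ∩ B) = cpr P A B * pr P B := by
  by_cases hB : pr P B = 0
  · have hle : pr P (A ∩ B) ≤ pr P B :=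
      ENNReal.toReal_mono (measure_ne_top P B) (measure_mono Set.inter_subset_right)
    rw [hB, mul_zero]
    exact le_antisymm (hB ▸ hle) ENNReal.toReal_nonneg
  · rw [cpr, div_mul_cancel₀ _ hB]

theorem pr_inter_add_pr_inter_compl {E : Set Ω} (hE : MeasurableSet E) (A : Set Ω) :
    pr P (A ∩ E) + pr P (A ∩ Eᶜ) = pr P A := by
  rw [pr, pr, pr, ← ENNReal.toReal_add (measure_ne_top P _) (measure_ne_top P _),
    ← Set.sdiff_eq, measure_inter_add_sdiff A hE]

theorem cpr_compl_eq_one_sub {E H : Set Ω} (hE : MeasurableSet E) (hH : pr P H ≠ 0) :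
    cpr P Eᶜ H = 1 - cpr P E H := by
  rw [eq_sub_iff_add_eq, cpr, cpr, ← add_div, div_eq_one_iff_eq hH, Set.inter_comm Eᶜ,
    Set.inter_comm E, add_comm, pr_inter_add_pr_inter_compl P hE]

theorem cpr_eq_cpr_inter_mul_add {E : Set Ω} (hE : MeasurableSet E) (T H : Set Ω) :
    cpr P T H = cpr P T (E ∩ H) * cpr P E H + cpr P T (Eᶜ ∩ H) * cpr P Eᶜ H := by
  have hsplit : pr P (T ∩ H) = pr P (T ∩ (E ∩ H)) + pr P (T ∩ (Eᶜ ∩ H)) := by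
    rw [← pr_inter_add_pr_inter_compl P hE (T ∩ H), Set.inter_right_comm _ _ E,
      Set.inter_right_comm _ _ Eᶜ, Set.inter_assoc, Set.inter_assoc]
  rw [cpr, hsplit, pr_inter_eq_cpr_mul P T, pr_inter_eq_cpr_mul P T, pr_inter_eq_cpr_mul P E,
    pr_inter_eq_cpr_mul P Eᶜ H]
  by_cases hH : pr P H = 0
  · simp [hH, cpr]
  · field_simp

theorem cpr_eq_mixture_of_condIndep {T E H : Set Ω} (hE : MeasurableSet E) (hH : pr P H ≠ 0)
    (hTE : cpr P T (E ∩ H) = cpr P T E) (hTEc : cpr P T (Eᶜ ∩ H) = cpr P T Eᶜ) :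
    cpr P T H = cpr P T E * cpr P E H + cpr P T Eᶜ * (1 - cpr P E H) := by
  rw [cpr_eq_cpr_inter_mul_add P hE, hTE, hTEc, cpr_compl_eq_one_sub P hE hH]

end Probability

theorem mixture_div_mixture_eq {a b p q : ℝ} (ha : a ≠ 0) (hp : p ≠ 0) (hq : q ≠ 0) :
    (a * p + b * (1 - p)) / (a * q + b * (1 - q)) =
      p / q * (1 + b / a * (1 / p - 1)) / (1 + b / a * (p / q / p - 1)) := by
  have hnum : 1 + b / a * (1 / p - 1) = (a * p + b * (1 - p)) / (a * p) := by
    field_simp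
  have hden : 1 + b / a * (p / q / p - 1) = (a * q + b * (1 - q)) / (a * q) := by
    field_simp
  have hcancel : p / q * ((a * p + b * (1 - p)) / (a * p)) * (a * q) = a * p + b * (1 - p) := by
    field_simp
  rw [hnum, hden, div_div_eq_mul_div, hcancel]

theorem testimony_effective_bayes_factor_general
    {Ω : Type*} [MeasurableSpace Ω] (P : Measure Ω) [IsProbabilityMeasure P]
    (Et E H : Set Ω)
    (hE : MeasurableSet E)
    (ht1 : cpr P Et (E ∩ H) = cpr P Et E)
    (ht2 : cpr P Et (Eᶜ ∩ H) = cpr P Et Eᶜ)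
    (ht3 : cpr P Et (E ∩ Hᶜ) = cpr P Et E)
    (ht4 : cpr P Et (Eᶜ ∩ Hᶜ) = cpr P Et Eᶜ)
    (hTE : 0 < cpr P Et E)
    (hO1 : 0 < cpr P E H) (hO2 : 0 < cpr P E Hᶜ) :
    cpr P Et H / cpr P Et Hᶜ =
      (cpr P E H / cpr P E Hᶜ) *
        (1 + (cpr P Et Eᶜ / cpr P Et E) * (1 / cpr P E H - 1)) /
        (1 + (cpr P Et Eᶜ / cpr P Et E) *
          ((cpr P E H / cpr P E Hᶜ) / cpr P E H - 1)) := by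
  have hH : pr P H ≠ 0 := fun h => by simp [cpr, h] at hO1
  have hHc : pr P Hᶜ ≠ 0 := fun h => by simp [cpr, h] at hO2
  rw [cpr_eq_mixture_of_condIndep P hE hH ht1 ht2, cpr_eq_mixture_of_condIndep P hE hHc ht3 ht4]
  exact mixture_div_mixture_eq hTE.ne' hO1.ne' hO2.ne'

/-- With lie factor `λ = P(Eₜ|Eᶜ)/P(Eₜ|E)`, `p = P(E|H)` and ideal Bayes factor
`Õ = P(E|H)/P(E|Hᶜ)` (positive and finite), the effective Bayes factor based on the
testified evidence factorizes as `Õ · [1 + λ(1/p − 1)] / [1 + λ(Õ/p − 1)]`. -/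
theorem testimony_effective_bayes_factor
    {Ω : Type*} [MeasurableSpace Ω] (P : Measure Ω) [IsProbabilityMeasure P]
    (Et E H : Set Ω)
    (hEt : MeasurableSet Et) (hE : MeasurableSet E) (hH : MeasurableSet H)
    (h1 : 0 < pr P (E ∩ H)) (h2 : 0 < pr P (Eᶜ ∩ H))
    (h3 : 0 < pr P (E ∩ Hᶜ)) (h4 : 0 < pr P (Eᶜ ∩ Hᶜ))
    (ht1 : cpr P Et (E ∩ H) = cpr P Et E)
    (ht2 : cpr P Et (Eᶜ ∩ H) = cpr P Et Eᶜ)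
    (ht3 : cpr P Et (E ∩ Hᶜ) = cpr P Et E)
    (ht4 : cpr P Et (Eᶜ ∩ Hᶜ) = cpr P Et Eᶜ)
    (hTE : 0 < cpr P Et E)
    (hO1 : 0 < cpr P E H) (hO2 : 0 < cpr P E Hᶜ) :
    cpr P Et H / cpr P Et Hᶜ =
      (cpr P E H / cpr P E Hᶜ) *
        (1 + (cpr P Et Eᶜ / cpr P Et E) * (1 / cpr P E H - 1)) /
        (1 + (cpr P Et Eᶜ / cpr P Et E) *
          ((cpr P E H / cpr P E Hᶜ) / cpr P E H - 1)) :=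
  testimony_effective_bayes_factor_general P Et E H hE ht1 ht2 ht3 ht4 hTE hO1 hO2
end

section
/- Under the testimony model with a perfectly discriminating evidence, i.e. events E_T, E, H with P(E ∩ H) > 0, P(Eᶜ ∩ H) > 0, P(Eᶜ ∩ Hᶜ) > 0, P(E ∩ Hᶜ) = 0 (so P(E | Hᶜ) = 0), P(E_T | E ∩ H') = P(E_T | E) > 0 and P(E_T | Eᶜ ∩ H') = P(E_T | Eᶜ) > 0 for H' ∈ {H, Hᶜ}, set λ = P(E_T | Eᶜ)/P(E_T | E) and p = P(E | H). Then the effective Bayes factor equals P(E_T | H)/P(E_T | Hᶜ) = p/λ + 1 − p, and if λ ≤ 1 this is at most 1/λ: even though the ideal Bayes factor of E is infinite, the testified evidence cannot exceed the inverse of the lie factor. -/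
open MeasureTheory Real

/-!
Conditioning on `H` and on `Hᶜ` and splitting along `E`, the testimony model gives, with
`p = P(E | H)`, `P(E_T | H) = P(E_T | E) p + P(E_T | Eᶜ) (1 - p)` and, since `E ∩ Hᶜ` is null,
`P(E_T | Hᶜ) = P(E_T | Eᶜ)`. Their quotient is `p/λ + 1 - p`, a convex combination of `1/λ`
and `1`, hence at most `1/λ` once `λ ≤ 1`.
-/

section ConditionalProbability

variable {Ω : Type*} [MeasurableSpace Ω] (P : Measure Ω) [IsFiniteMeasure P]

lemma pr_mono {A B : Set Ω} (h : A ⊆ B) : pr P A ≤ pr P B :=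
  measureReal_mono h

lemma cpr_le_one (A B : Set Ω) : cpr P A B ≤ 1 :=
  div_le_one_of_le₀ (pr_mono P Set.inter_subset_right) measureReal_nonneg

lemma cpr_inter_add_cpr_inter_compl {E : Set Ω} (hE : MeasurableSet E) (A B : Set Ω) :
    cpr P (A ∩ E) B + cpr P (A ∩ Eᶜ) B = cpr P A B := by
  have hsplit : pr P (A ∩ B ∩ E) + pr P (A ∩ B ∩ Eᶜ) = pr P (A ∩ B) := by
    rw [← Set.sdiff_eq]
    exact measureReal_inter_add_sdiff hE
  rw [Set.inter_right_comm, Set.inter_right_comm A B] at hsplit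
  rw [cpr, cpr, cpr, ← add_div, hsplit]

lemma cpr_compl {E B : Set Ω} (hE : MeasurableSet E) (hB : pr P B ≠ 0) :
    cpr P Eᶜ B = 1 - cpr P E B := by
  have hunion := cpr_inter_add_cpr_inter_compl P hE Set.univ B
  have huniv : cpr P Set.univ B = 1 := by rw [cpr, Set.univ_inter, div_self hB]
  rw [Set.univ_inter, Set.univ_inter, huniv] at hunion
  linarith

lemma cpr_inter_mul_cpr (A E B : Set Ω) : cpr P A (E ∩ B) * cpr P E B = cpr P (A ∩ E) B := by
  rw [cpr, cpr, cpr, Set.inter_assoc]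
  by_cases hEB : pr P (E ∩ B) = 0
  · have hAEB : pr P (A ∩ (E ∩ B)) = 0 :=
      le_antisymm (hEB ▸ pr_mono P Set.inter_subset_right) measureReal_nonneg
    simp [hEB, hAEB]
  · rw [div_mul_div_cancel₀ hEB]

lemma cpr_eq_cpr_inter_mul_add_cpr_compl_inter_mul {E : Set Ω} (hE : MeasurableSet E)
    (A B : Set Ω) :
    cpr P A B = cpr P A (E ∩ B) * cpr P E B + cpr P A (Eᶜ ∩ B) * cpr P Eᶜ B := by
  rw [cpr_inter_mul_cpr, cpr_inter_mul_cpr, cpr_inter_add_cpr_inter_compl P hE]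

end ConditionalProbability

lemma div_add_one_sub_le_one_div {p l : ℝ} (hp : p ≤ 1) (hl : 0 < l) (hl1 : l ≤ 1) :
    p / l + 1 - p ≤ 1 / l := by
  have hinv : 1 ≤ 1 / l := one_le_one_div hl hl1
  rw [div_eq_mul_one_div p l]
  nlinarith [mul_nonneg (sub_nonneg.2 hp) (sub_nonneg.2 hinv)]

theorem testimony_bound_perfect_evidence_general
    {Ω : Type*} [MeasurableSpace Ω] (P : Measure Ω) [IsProbabilityMeasure P]
    (Et E H : Set Ω)
    (hE : MeasurableSet E)
    (h1 : 0 < pr P (E ∩ H))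
    (h4 : 0 < pr P (Eᶜ ∩ Hᶜ)) (h3 : pr P (E ∩ Hᶜ) = 0)
    (ht1 : cpr P Et (E ∩ H) = cpr P Et E)
    (ht2 : cpr P Et (Eᶜ ∩ H) = cpr P Et Eᶜ)
    (ht4 : cpr P Et (Eᶜ ∩ Hᶜ) = cpr P Et Eᶜ)
    (hTE : 0 < cpr P Et E) (hTEc : 0 < cpr P Et Eᶜ) :
    cpr P Et H / cpr P Et Hᶜ =
        cpr P E H / (cpr P Et Eᶜ / cpr P Et E) + 1 - cpr P E H ∧
      (cpr P Et Eᶜ / cpr P Et E ≤ 1 →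
        cpr P Et H / cpr P Et Hᶜ ≤ 1 / (cpr P Et Eᶜ / cpr P Et E)) := by
  have hH : pr P H ≠ 0 := (h1.trans_le (pr_mono P Set.inter_subset_right)).ne'
  have hHc : pr P Hᶜ ≠ 0 := (h4.trans_le (pr_mono P Set.inter_subset_right)).ne'
  have hEHc : cpr P E Hᶜ = 0 := by rw [cpr, h3, zero_div]
  have hEtH : cpr P Et H = cpr P Et E * cpr P E H + cpr P Et Eᶜ * (1 - cpr P E H) := by
    rw [cpr_eq_cpr_inter_mul_add_cpr_compl_inter_mul P hE, ht1, ht2, cpr_compl P hE hH]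
  have hEtHc : cpr P Et Hᶜ = cpr P Et Eᶜ := by
    rw [cpr_eq_cpr_inter_mul_add_cpr_compl_inter_mul P hE, ht4, cpr_compl P hE hHc, hEHc]
    ring
  have hbayes : cpr P Et H / cpr P Et Hᶜ =
      cpr P E H / (cpr P Et Eᶜ / cpr P Et E) + 1 - cpr P E H := by
    rw [hEtH, hEtHc, div_div_eq_mul_div]
    field_simp
    ring
  refine ⟨hbayes, fun hlie => ?_⟩
  rw [hbayes]
  exact div_add_one_sub_le_one_div (cpr_le_one P E H) (div_pos hTEc hTE) hlie

/-- Perfectly discriminating evidence (`P(E|Hᶜ) = 0`) reported through a testimony: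
the effective Bayes factor equals `p/λ + 1 − p` (with `p = P(E|H)` and lie factor `λ`),
and if `λ ≤ 1` it cannot exceed `1/λ`, even though the ideal Bayes factor is infinite. -/
theorem testimony_bound_perfect_evidence
    {Ω : Type*} [MeasurableSpace Ω] (P : Measure Ω) [IsProbabilityMeasure P]
    (Et E H : Set Ω)
    (hEt : MeasurableSet Et) (hE : MeasurableSet E) (hH : MeasurableSet H)
    (h1 : 0 < pr P (E ∩ H)) (h2 : 0 < pr P (Eᶜ ∩ H))
    (h4 : 0 < pr P (Eᶜ ∩ Hᶜ)) (h3 : pr P (E ∩ Hᶜ) = 0)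
    (ht1 : cpr P Et (E ∩ H) = cpr P Et E)
    (ht2 : cpr P Et (Eᶜ ∩ H) = cpr P Et Eᶜ)
    (ht4 : cpr P Et (Eᶜ ∩ Hᶜ) = cpr P Et Eᶜ)
    (hTE : 0 < cpr P Et E) (hTEc : 0 < cpr P Et Eᶜ) :
    cpr P Et H / cpr P Et Hᶜ =
        cpr P E H / (cpr P Et Eᶜ / cpr P Et E) + 1 - cpr P E H ∧
      (cpr P Et Eᶜ / cpr P Et E ≤ 1 →
        cpr P Et H / cpr P Et Hᶜ ≤ 1 / (cpr P Et Eᶜ / cpr P Et E)) :=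
  testimony_bound_perfect_evidence_general P Et E H hE h1 h4 h3 ht1 ht2 ht4 hTE hTEc
end

section
/- Under the testimony model with evidence impossible under H, i.e. events E_T, E, H with P(E ∩ H) = 0 (so P(E | H) = 0), P(Eᶜ ∩ H) > 0, P(E ∩ Hᶜ) > 0, P(Eᶜ ∩ Hᶜ) > 0, P(E_T | E ∩ H') = P(E_T | E) > 0 and P(E_T | Eᶜ ∩ H') = P(E_T | Eᶜ) > 0 for H' ∈ {H, Hᶜ}, set λ = P(E_T | Eᶜ)/P(E_T | E). Then the effective Bayes factor of H against Hᶜ based on the testimony equals P(E_T | H)/P(E_T | Hᶜ) = 1 / [P(Eᶜ | Hᶜ) + P(E | Hᶜ)/λ]. -/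
open MeasureTheory Real

/-!
Since `E` is null under `H`, conditioning on `H` is the same as conditioning on `Eᶜ ∩ H`, so
`P(E_T | H) = P(E_T | Eᶜ)`. Under `Hᶜ` the law of total probability, together with the
conditional independence of `E_T` and the hypothesis given `E` or `Eᶜ`, gives
`P(E_T | Hᶜ) = P(E_T | E) P(E | Hᶜ) + P(E_T | Eᶜ) P(Eᶜ | Hᶜ)`. Dividing numerator and
denominator of the Bayes factor by `P(E_T | Eᶜ)` yields the formula.
-/

section ConditionalProbability

variable {Ω : Type*} [MeasurableSpace Ω] (P : Measure Ω) [IsFiniteMeasure P]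

theorem pr_inter_add_pr_compl_inter (A : Set Ω) {E : Set Ω} (hE : MeasurableSet E) :
    pr P (E ∩ A) + pr P (Eᶜ ∩ A) = pr P A := by
  rw [Set.inter_comm E, Set.inter_comm Eᶜ]
  exact measureReal_inter_add_sdiff hE

theorem cpr_eq_cpr_mul_add_cpr_mul (A B : Set Ω) {E : Set Ω} (hE : MeasurableSet E) :
    cpr P A B = cpr P A (E ∩ B) * cpr P E B + cpr P A (Eᶜ ∩ B) * cpr P Eᶜ B := by
  rw [cpr, ← pr_inter_add_pr_compl_inter P (A ∩ B) hE, Set.inter_left_comm E,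
    Set.inter_left_comm Eᶜ, pr_inter_eq_cpr_mul P A (E ∩ B), pr_inter_eq_cpr_mul P A (Eᶜ ∩ B),
    add_div, mul_div_assoc, mul_div_assoc]
  rfl

theorem cpr_compl_inter_eq_cpr_of_pr_inter_eq_zero (A B : Set Ω) {E : Set Ω}
    (hE : MeasurableSet E) (h : pr P (E ∩ B) = 0) : cpr P A (Eᶜ ∩ B) = cpr P A B := by
  have hnull : pr P (A ∩ (E ∩ B)) = 0 := measureReal_mono_null Set.inter_subset_right h
  have hnum : pr P (A ∩ (Eᶜ ∩ B)) = pr P (A ∩ B) := by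
    rw [← pr_inter_add_pr_compl_inter P (A ∩ B) hE, Set.inter_left_comm E, Set.inter_left_comm Eᶜ,
      hnull, zero_add]
  have hden : pr P (Eᶜ ∩ B) = pr P B := by
    rw [← pr_inter_add_pr_compl_inter P B hE, h, zero_add]
  rw [cpr, cpr, hnum, hden]

end ConditionalProbability

theorem testimony_evidence_impossible_under_H_general
    {Ω : Type*} [MeasurableSpace Ω] (P : Measure Ω) [IsProbabilityMeasure P]
    (Et E H : Set Ω)
    (hE : MeasurableSet E)
    (h1 : pr P (E ∩ H) = 0)
    (ht2 : cpr P Et (Eᶜ ∩ H) = cpr P Et Eᶜ)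
    (ht3 : cpr P Et (E ∩ Hᶜ) = cpr P Et E)
    (ht4 : cpr P Et (Eᶜ ∩ Hᶜ) = cpr P Et Eᶜ)
    (hTEc : 0 < cpr P Et Eᶜ) :
    cpr P Et H / cpr P Et Hᶜ =
      1 / (cpr P Eᶜ Hᶜ + cpr P E Hᶜ / (cpr P Et Eᶜ / cpr P Et E)) := by
  have hH : cpr P Et H = cpr P Et Eᶜ :=
    (cpr_compl_inter_eq_cpr_of_pr_inter_eq_zero P Et H hE h1).symm.trans ht2
  have hHc : cpr P Et Hᶜ = cpr P Et E * cpr P E Hᶜ + cpr P Et Eᶜ * cpr P Eᶜ Hᶜ := by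
    rw [cpr_eq_cpr_mul_add_cpr_mul P Et Hᶜ hE, ht3, ht4]
  rw [hH, hHc, div_div_eq_mul_div, add_div' _ _ _ hTEc.ne', one_div_div]
  ring

/-- Evidence impossible under `H` (`P(E|H) = 0`) reported through a testimony:
the effective Bayes factor of `H` against `Hᶜ` equals
`1 / [P(Eᶜ|Hᶜ) + P(E|Hᶜ)/λ]`, where `λ` is the lie factor. -/
theorem testimony_evidence_impossible_under_H
    {Ω : Type*} [MeasurableSpace Ω] (P : Measure Ω) [IsProbabilityMeasure P]
    (Et E H : Set Ω)
    (hEt : MeasurableSet Et) (hE : MeasurableSet E) (hH : MeasurableSet H)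
    (h1 : pr P (E ∩ H) = 0) (h2 : 0 < pr P (Eᶜ ∩ H))
    (h3 : 0 < pr P (E ∩ Hᶜ)) (h4 : 0 < pr P (Eᶜ ∩ Hᶜ))
    (ht2 : cpr P Et (Eᶜ ∩ H) = cpr P Et Eᶜ)
    (ht3 : cpr P Et (E ∩ Hᶜ) = cpr P Et E)
    (ht4 : cpr P Et (Eᶜ ∩ Hᶜ) = cpr P Et Eᶜ)
    (hTE : 0 < cpr P Et E) (hTEc : 0 < cpr P Et Eᶜ) :
    cpr P Et H / cpr P Et Hᶜ =
      1 / (cpr P Eᶜ Hᶜ + cpr P E Hᶜ / (cpr P Et Eᶜ / cpr P Et E)) :=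
  testimony_evidence_impossible_under_H_general P Et E H hE h1 ht2 ht3 ht4 hTEc
end
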